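/- arXiv:1812.01921 — 7 statements merged into one kernel-verified Lean document; each statement's English description precedes it below -/
import Mathlib

section
/- Let D be a bounded distributive lattice viewed as a sublattice of a Boolean algebra B. If for every b ∈ B of the form a \ a' with a, a' ∈ D, the set {c ∈ D | b ≤ c} has a least element, and B is generated by D (every element of B is a finite join of differences a \ a' with a, a' ∈ D), then for every b ∈ B the set {c ∈ D | b ≤ c} has a least element, i.e. the ceiling function ⌈·⌉ : B → D is globally defined. -/
theorem stmt2 {B : Type*} [BooleanAlgebra B] (D : Set B)
    (hbot : ⊥ ∈ D) (htop : ⊤ ∈ D)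
    (hinf : ∀ a ∈ D, ∀ b ∈ D, a ⊓ b ∈ D) (hsup : ∀ a ∈ D, ∀ b ∈ D, a ⊔ b ∈ D)
    -- every difference of elements of `D` has a least upper bound in `D`
    (hdif : ∀ a ∈ D, ∀ a' ∈ D, ∃ c ∈ D, a \ a' ≤ c ∧ ∀ c' ∈ D, a \ a' ≤ c' → c ≤ c')
    -- `B` is generated by `D`: every element is a finite join of differences of elements of `D`
    (hgen : ∀ b : B, ∃ (n : ℕ) (u v : Fin n → B),
      (∀ i, u i ∈ D ∧ v i ∈ D) ∧ b = (Finset.univ : Finset (Fin n)).sup (fun i => u i \ v i)) :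
    ∀ b : B, ∃ c ∈ D, b ≤ c ∧ ∀ c' ∈ D, b ≤ c' → c ≤ c' := by
  intro b
  obtain ⟨n, u, v, huv, rfl⟩ := hgen b
  choose c hcD hle hmin using fun i =>
    hdif (u i) (huv i).1 (v i) (huv i).2
  refine ⟨Finset.univ.sup c, ?_, ?_, ?_⟩
  · refine Finset.sup_induction hbot (fun a ha b hb => hsup a ha b hb) ?_
    intro i _
    exact hcD i
  · exact Finset.sup_mono_fun fun i _ => hle i
  · intro c' hc' hbc'
    refine Finset.sup_le fun i _ => hmin i c' hc' ?_
    exact le_trans (Finset.le_sup (f := fun i => u i \ v i) (Finset.mem_univ i)) hbc'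
end

section
/- A bounded distributive lattice D is a co-Heyting algebra (i.e. for all a, b ∈ D the set {c | a ≤ b ⊔ c} has a minimum a/b, and a/b ≤ c ↔ a ≤ b ⊔ c for all c) if and only if the inclusion of D into its Booleanization D⁻ has a lower adjoint ⌈·⌉ : D⁻ → D, where ⌈x⌉ ≤ c ↔ x ≤ c for all c ∈ D. -/
/-- `D` is a bounded sublattice of the Boolean algebra `B` which generates `B` as a Boolean
algebra (equivalently, every element of `B` is a finite join of differences of elements of `D`);
i.e. `B` is the Booleanization of `D`. -/
theorem stmt3 {B : Type*} [BooleanAlgebra B] (D : Set B)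
    (hbot : ⊥ ∈ D) (htop : ⊤ ∈ D)
    (hinf : ∀ a ∈ D, ∀ b ∈ D, a ⊓ b ∈ D) (hsup : ∀ a ∈ D, ∀ b ∈ D, a ⊔ b ∈ D)
    (hgen : ∀ b : B, ∃ (n : ℕ) (u v : Fin n → B),
      (∀ i, u i ∈ D ∧ v i ∈ D) ∧ b = (Finset.univ : Finset (Fin n)).sup (fun i => u i \ v i)) :
    -- `D` is a co-Heyting algebra
    (∀ a ∈ D, ∀ b ∈ D, ∃ m ∈ D, ∀ c ∈ D, (m ≤ c ↔ a ≤ b ⊔ c)) ↔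
    -- iff the inclusion `D → B = D⁻` has a lower adjoint (a ceiling function)
    (∃ ceil : B → B, (∀ x : B, ceil x ∈ D) ∧ ∀ (x : B), ∀ c ∈ D, (ceil x ≤ c ↔ x ≤ c)) := by
  constructor
  · intro h
    choose m hmD hm using h
    choose n u v huv hx using hgen
    refine ⟨fun x => (Finset.univ : Finset (Fin (n x))).sup
        (fun i => m (u x i) (huv x i).1 (v x i) (huv x i).2), ?_, ?_⟩
    · intro x
      exact Finset.sup_induction hbot (fun a ha b hb => hsup a ha b hb)
        (fun i _ => hmD _ _ _ _)
    · intro x c hc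
      rw [Finset.sup_le_iff]
      constructor
      · intro hall
        rw [hx x, Finset.sup_le_iff]
        intro i _
        rw [sdiff_le_iff]
        exact (hm _ _ _ _ c hc).mp (hall i (Finset.mem_univ i))
      · intro hxc i _
        rw [hm _ _ _ _ c hc, ← sdiff_le_iff]
        exact le_trans (le_of_le_of_eq (Finset.le_sup (f := fun j => u x j \ v x j) (Finset.mem_univ i)) (hx x).symm) hxc
  · rintro ⟨ceil, hceilD, hceil⟩ a ha b hb
    refine ⟨ceil (a \ b), hceilD _, fun c hc => ?_⟩
    rw [hceil _ c hc, sdiff_le_iff]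
end

section
/- Let P be a poset and suppose V ⊆ P equals a finite union ⋃_{i=1}^{m} (Uᵢ \ Wᵢ) where each Uᵢ and Wᵢ is an upset. Then every element of P has degree at most 2m with respect to V. -/
/-- `HasAltSeq S p n` : there is an alternating sequence `p₁ < p₂ < … < pₙ = p`
with respect to `S`, i.e. a strict chain whose `i`-th member (1-indexed) belongs to `S`
iff `i` is odd, ending at `p`. -/
def HasAltSeq {P : Type*} [PartialOrder P] (S : Set P) (p : P) (n : ℕ) : Prop :=
  ∃ c : Fin n → P, StrictMono c ∧ (∀ i : Fin n, c i ∈ S ↔ i.val % 2 = 0) ∧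
    ∃ h : 0 < n, c ⟨n - 1, by omega⟩ = p

/-- `DegEq S p n` : `p` has degree `n` with respect to `S`, i.e. `n` is the largest length
of an alternating sequence for `p` (and `n = 0` if there is none). -/
def DegEq {P : Type*} [PartialOrder P] (S : Set P) (p : P) (n : ℕ) : Prop :=
  (n = 0 ∨ HasAltSeq S p n) ∧ ∀ k, HasAltSeq S p k → k ≤ n

theorem stmt9 {P : Type*} [PartialOrder P] (m : ℕ) (V : Set P)
    (U W : Fin m → Set P) (hU : ∀ i, IsUpperSet (U i)) (hW : ∀ i, IsUpperSet (W i))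
    (hV : V = ⋃ i : Fin m, (U i \ W i)) :
    ∀ (p : P) (n : ℕ), HasAltSeq V p n → n ≤ 2 * m := by
  rintro p n ⟨c, hmono, halt, hpos, -⟩
  by_contra hlt
  push_neg at hlt
  -- n ≥ 2m+1; the even 0-indexed positions 0, 2, ..., 2m give m+1 points in V
  have hVmem : ∀ j : Fin (m + 1), c ⟨2 * j.val, by omega⟩ ∈ V := by
    intro j
    exact (halt _).mpr (by show 2 * j.val % 2 = 0; omega)
  -- choose for each such point an index i with membership in U i \ W i
  have hchoice : ∀ j : Fin (m + 1), ∃ i : Fin m,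
      c ⟨2 * j.val, by omega⟩ ∈ U i \ W i := by
    intro j
    have := hVmem j
    rw [hV] at this
    simpa using this
  choose f hf using hchoice
  -- pigeonhole
  obtain ⟨j, k, hjk, hfeq⟩ := Fintype.exists_ne_map_eq_of_card_lt f (by simp)
  -- WLOG j < k
  wlog hjk' : j.val < k.val generalizing j k
  · have hne := Fin.val_ne_of_ne hjk
    exact this k j hjk.symm hfeq.symm (by omega)
  set i := f j with hi
  have hj := hf j
  have hk := hf k
  rw [← hfeq] at hk
  -- consider the intermediate point at index 2j+1
  have h1 : (2 * j.val + 1 : ℕ) < n := by omega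
  have hlt1 : c ⟨2 * j.val, by omega⟩ < c ⟨2 * j.val + 1, h1⟩ := hmono (by simp [Fin.lt_def])
  have hlt2 : c ⟨2 * j.val + 1, h1⟩ < c ⟨2 * k.val, by omega⟩ := hmono (by simp [Fin.lt_def]; omega)
  have hUi : c ⟨2 * j.val + 1, h1⟩ ∈ U i := hU i hlt1.le hj.1
  have hWi : c ⟨2 * j.val + 1, h1⟩ ∉ W i := fun hw => hk.2 (hW i hlt2.le hw)
  have : c ⟨2 * j.val + 1, h1⟩ ∈ V := by
    rw [hV]; exact Set.mem_iUnion.mpr ⟨i, hUi, hWi⟩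
  have h2 : (2 * j.val + 1) % 2 = 0 := (halt ⟨2 * j.val + 1, h1⟩).mp this
  omega
end

section
/- Let X be a Priestley space, V ⊆ X clopen, and let K₁ = ↑V, K₂ = ↑(K₁ \ V). Then K₁ and K₂ are closed upsets, and for i ∈ {1,2}: Kᵢ = {x ∈ X | deg_V(x) ≥ i} = ↑{x ∈ X | deg_V(x) = i}. -/
open Set

/-- The upset generated by a set. -/
def upSet {X : Type*} [Preorder X] (S : Set X) : Set X := {x | ∃ s ∈ S, s ≤ x}

section Aux

lemma isUpperSet_upSet' {P : Type*} [Preorder P] (S : Set P) : IsUpperSet (upSet S) :=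
  fun _ _ hab ⟨s, hs, hsa⟩ => ⟨s, hs, hsa.trans hab⟩

lemma subset_upSet' {P : Type*} [Preorder P] (S : Set P) : S ⊆ upSet S :=
  fun s hs => ⟨s, hs, le_rfl⟩

variable {X : Type*} [PartialOrder X] [TopologicalSpace X] [CompactSpace X] [PriestleySpace X]

lemma isClosed_Iic' (x : X) : IsClosed (Set.Iic x) := by
  rw [← isOpen_compl_iff, isOpen_iff_forall_mem_open]
  intro y hy
  obtain ⟨U, hUc, hUu, hyU, hxU⟩ := exists_isClopen_upper_of_not_le (show ¬ y ≤ x from hy)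
  exact ⟨U, fun z hz hzx => hxU (hUu hzx hz), hUc.isOpen, hyU⟩

lemma isClosed_upSet' {S : Set X} (hS : IsClosed S) : IsClosed (upSet S) := by
  rw [← isOpen_compl_iff, isOpen_iff_forall_mem_open]
  intro x hx
  have h : ∀ s : S, ∃ U : Set X, IsClopen U ∧ IsUpperSet U ∧ (s : X) ∈ U ∧ x ∉ U := by
    rintro ⟨s, hs⟩
    exact exists_isClopen_upper_of_not_le fun hle => hx ⟨s, hs, hle⟩
  choose U hUc hUu hsU hxU using h
  obtain ⟨t, ht⟩ := hS.isCompact.elim_finite_subcover U (fun i => (hUc i).isOpen)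
    (fun s hs => mem_iUnion.2 ⟨⟨s, hs⟩, hsU _⟩)
  refine ⟨(⋃ i ∈ t, U i)ᶜ, ?_, ?_, ?_⟩
  · rintro z hz ⟨s, hs, hsz⟩
    have hsW : s ∈ ⋃ i ∈ t, U i := ht hs
    obtain ⟨i, hi, hsi⟩ := mem_iUnion₂.1 hsW
    exact hz (mem_iUnion₂.2 ⟨i, hi, hUu i hsz hsi⟩)
  · exact (t.finite_toSet.isClosed_biUnion fun i _ => (hUc i).isClosed).isOpen_compl
  · intro hmem
    obtain ⟨i, _, hxi⟩ := mem_iUnion₂.1 hmem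
    exact hxU i hxi

lemma exists_minimal' {C : Set X} (hC : IsClosed C) (hne : C.Nonempty) :
    ∃ y ∈ C, ∀ z ∈ C, z ≤ y → z = y := by
  obtain ⟨x0, hx0⟩ := hne
  have ih : ∀ c : Set Xᵒᵈ, c ⊆ C → IsChain (· ≤ ·) c → ∃ ub ∈ C, ∀ z ∈ c, z ≤ ub := by
    intro c hcC hc
    rcases c.eq_empty_or_nonempty with rfl | hcne
    · exact ⟨x0, hx0, by simp⟩
    have hne' : Nonempty c := hcne.to_subtype
    let t : c → Set X := fun a => C ∩ Set.Iic (OrderDual.ofDual a.1)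
    have key : (⋂ a, t a).Nonempty := by
      apply IsCompact.nonempty_iInter_of_directed_nonempty_isCompact_isClosed
      · intro a b
        rcases hc.total a.2 b.2 with h | h
        · exact ⟨b, fun x hx => ⟨hx.1, hx.2.trans h⟩, Set.Subset.rfl⟩
        · exact ⟨a, Set.Subset.rfl, fun x hx => ⟨hx.1, hx.2.trans h⟩⟩
      · exact fun a => ⟨OrderDual.ofDual a.1, hcC a.2, le_rfl⟩
      · exact fun a => (hC.inter (isClosed_Iic' _)).isCompact
      · exact fun a => hC.inter (isClosed_Iic' _)
    obtain ⟨y, hy⟩ := key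
    simp only [Set.mem_iInter, t, Set.mem_inter_iff, Set.mem_Iic] at hy
    exact ⟨OrderDual.toDual y, (hy ⟨_, hcne.choose_spec⟩).1, fun z hz => (hy ⟨z, hz⟩).2⟩
  obtain ⟨m, hm⟩ := zorn_le₀ (α := Xᵒᵈ) C ih
  refine ⟨OrderDual.ofDual m, hm.1, fun z hz hzm => ?_⟩
  exact le_antisymm hzm (hm.2 hz hzm)

variable {V : Set X}

lemma hasAltSeq_one {p : X} (hp : p ∈ V) : HasAltSeq V p 1 :=
  ⟨fun _ => p, fun i j hij => absurd hij (by omega),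
    fun i => by simpa using hp, by omega, rfl⟩

lemma hasAltSeq_two {v p : X} (hv : v ∈ V) (hp : p ∉ V) (h : v < p) : HasAltSeq V p 2 := by
  refine ⟨![v, p], ?_, ?_, by omega, by simp⟩
  · intro i j hij
    fin_cases i <;> fin_cases j <;> simp_all <;> omega
  · intro i; fin_cases i <;> simp [hv, hp]

lemma hasAltSeq_three {u w p : X} (hu : u ∈ V) (hw : w ∉ V) (hp : p ∈ V)
    (h1 : u < w) (h2 : w < p) : HasAltSeq V p 3 := by
  refine ⟨![u, w, p], ?_, ?_, by omega, by simp⟩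
  · intro i j hij
    fin_cases i <;> fin_cases j <;> simp_all <;> first | exact h1.trans h2 | omega
  · intro i; fin_cases i <;> simp [hu, hw, hp]

lemma hasAltSeq_mem_K1 {p : X} {n : ℕ} (hn : 1 ≤ n) (h : HasAltSeq V p n) :
    p ∈ upSet V := by
  obtain ⟨c, hmono, hmem, hpos, hlast⟩ := h
  refine ⟨c ⟨0, by omega⟩, (hmem _).2 rfl, ?_⟩
  rw [← hlast]
  exact hmono.monotone (by simp)

lemma hasAltSeq_mem_K2 {p : X} {n : ℕ} (hn : 2 ≤ n) (h : HasAltSeq V p n) :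
    p ∈ upSet (upSet V \ V) := by
  obtain ⟨c, hmono, hmem, hpos, hlast⟩ := h
  refine ⟨c ⟨1, by omega⟩, ⟨⟨c ⟨0, by omega⟩, (hmem _).2 rfl,
    (hmono (show (⟨0, by omega⟩ : Fin n) < ⟨1, by omega⟩ by simp [Fin.mk_lt_mk])).le⟩,
    fun hmem1 => by have h1 : (1 : ℕ) % 2 = 0 := (hmem ⟨1, by omega⟩).1 hmem1; omega⟩, ?_⟩
  rw [← hlast]
  exact hmono.monotone (by simp [Fin.mk_le_mk]; omega)

end Aux

theorem stmt11 {X : Type*} [PartialOrder X] [TopologicalSpace X]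
    [CompactSpace X] [PriestleySpace X] (V : Set X) (hV : IsClopen V)
    (K₁ K₂ : Set X) (hK₁ : K₁ = upSet V) (hK₂ : K₂ = upSet (K₁ \ V)) :
    (IsClosed K₁ ∧ IsUpperSet K₁) ∧ (IsClosed K₂ ∧ IsUpperSet K₂) ∧
    (K₁ = {x : X | ∃ n, 1 ≤ n ∧ HasAltSeq V x n} ∧ K₁ = upSet {x : X | DegEq V x 1}) ∧
    (K₂ = {x : X | ∃ n, 2 ≤ n ∧ HasAltSeq V x n} ∧ K₂ = upSet {x : X | DegEq V x 2}) := by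
  subst hK₁ hK₂
  have hK1c : IsClosed (upSet V) := isClosed_upSet' hV.isClosed
  have hK1V : IsClosed (upSet V \ V) := hK1c.sdiff hV.isOpen
  have hK2c : IsClosed (upSet (upSet V \ V)) := isClosed_upSet' hK1V
  refine ⟨⟨hK1c, isUpperSet_upSet' V⟩, ⟨hK2c, isUpperSet_upSet' _⟩, ⟨?_, ?_⟩, ⟨?_, ?_⟩⟩
  · -- K₁ = {x | ∃ n ≥ 1, HasAltSeq}
    ext x
    constructor
    · rintro ⟨v, hv, hvx⟩
      by_cases hx : x ∈ V
      · exact ⟨1, le_rfl, hasAltSeq_one hx⟩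
      · have : v < x := lt_of_le_of_ne hvx (fun h => hx (h ▸ hv))
        exact ⟨2, by omega, hasAltSeq_two hv hx this⟩
    · rintro ⟨n, hn, h⟩
      exact hasAltSeq_mem_K1 hn h
  · -- K₁ = upSet {DegEq 1}
    apply Set.Subset.antisymm
    · rintro x ⟨v, hv, hvx⟩
      have hCc : IsClosed (V ∩ Set.Iic x) := hV.isClosed.inter (isClosed_Iic' x)
      obtain ⟨y, ⟨hyV, hyx⟩, hymin⟩ := exists_minimal' hCc ⟨v, hv, hvx⟩
      refine ⟨y, ⟨Or.inr (hasAltSeq_one hyV), ?_⟩, hyx⟩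
      intro k hk
      by_contra hk2
      push_neg at hk2
      obtain ⟨c, hmono, hmem, hpos, hlast⟩ := hk
      have hlastV : (k - 1) % 2 = 0 := (hmem _).1 (hlast ▸ hyV)
      have hk3 : 3 ≤ k := by omega
      have hzV : c ⟨k - 3, by omega⟩ ∈ V := (hmem _).2 (show (k - 3) % 2 = 0 by omega)
      have hzy : c ⟨k - 3, by omega⟩ < y := by
        rw [← hlast]; exact hmono (by simp [Fin.mk_lt_mk]; omega)
      exact absurd (hymin _ ⟨hzV, hzy.le.trans hyx⟩ hzy.le) hzy.ne
    · rintro x ⟨s, hs, hsx⟩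
      have : s ∈ upSet V := by
        rcases hs.1 with h | h
        · omega
        · exact hasAltSeq_mem_K1 le_rfl h
      exact isUpperSet_upSet' V hsx this
  · -- K₂ = {x | ∃ n ≥ 2, HasAltSeq}
    ext x
    constructor
    · rintro ⟨y, ⟨⟨v, hv, hvy⟩, hyV⟩, hyx⟩
      have hvy' : v < y := lt_of_le_of_ne hvy (fun h => hyV (h ▸ hv))
      by_cases hx : x ∈ V
      · have hyx' : y < x := lt_of_le_of_ne hyx (fun h => hyV (h ▸ hx))
        exact ⟨3, by omega, hasAltSeq_three hv hyV hx hvy' hyx'⟩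
      · exact ⟨2, le_rfl, hasAltSeq_two hv hx (hvy'.trans_le hyx)⟩
    · rintro ⟨n, hn, h⟩
      exact hasAltSeq_mem_K2 hn h
  · -- K₂ = upSet {DegEq 2}
    apply Set.Subset.antisymm
    · rintro x ⟨w, hw, hwx⟩
      have hCc : IsClosed ((upSet V \ V) ∩ Set.Iic x) := hK1V.inter (isClosed_Iic' x)
      obtain ⟨y, ⟨⟨⟨v, hv, hvy⟩, hyV⟩, hyx⟩, hymin⟩ := exists_minimal' hCc ⟨w, hw, hwx⟩
      have hvy' : v < y := lt_of_le_of_ne hvy (fun h => hyV (h ▸ hv))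
      refine ⟨y, ⟨Or.inr (hasAltSeq_two hv hyV hvy'), ?_⟩, hyx⟩
      intro k hk
      by_contra hk2
      push_neg at hk2
      obtain ⟨c, hmono, hmem, hpos, hlast⟩ := hk
      have hlastV : ¬ (k - 1) % 2 = 0 := fun h => hyV (hlast ▸ ((hmem ⟨k - 1, by omega⟩).2 h))
      have hk4 : 4 ≤ k := by omega
      set z := c ⟨k - 3, by omega⟩ with hz
      have hzV : z ∉ V := fun h => by
        have h3 : (k - 3) % 2 = 0 := (hmem ⟨k - 3, by omega⟩).1 h; omega
      have hwz : c ⟨k - 4, by omega⟩ < z := hmono (by simp [Fin.mk_lt_mk]; omega)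
      have hwV : c ⟨k - 4, by omega⟩ ∈ V := (hmem _).2 (show (k - 4) % 2 = 0 by omega)
      have hzy : z < y := by
        rw [← hlast]; exact hmono (by simp [Fin.mk_lt_mk]; omega)
      exact absurd (hymin z ⟨⟨⟨_, hwV, hwz.le⟩, hzV⟩, hzy.le.trans hyx⟩ hzy.le) hzy.ne
    · rintro x ⟨s, hs, hsx⟩
      have : s ∈ upSet (upSet V \ V) := by
        rcases hs.1 with h | h
        · omega
        · exact hasAltSeq_mem_K2 le_rfl h
      exact isUpperSet_upSet' _ hsx this
end

section
/- Let X be a Priestley space, V ⊆ X clopen, and define closed upsets K₁ = ↑V, K_{2i} = ↑(K_{2i-1} \ V), K_{2i+1} = ↑(K_{2i} ∩ V). Then (Kₙ) is a decreasing sequence, Kₙ = {x | deg_V(x) ≥ n} for all n ≥ 1, and V = ⋃_{i=1}^{m} (K_{2i-1} \ K_{2i}) where 2m−1 is the maximum degree (with respect to V) of an element of V. -/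
/-- The canonical decreasing sequence of closed upsets associated with `V`:
`K 1 = ↑V`, `K (2i) = ↑(K (2i-1) \ V)`, `K (2i+1) = ↑(K (2i) ∩ V)`. -/
def Kseq {X : Type*} [Preorder X] (V : Set X) : ℕ → Set X
  | 0 => Set.univ
  | 1 => upSet V
  | (n + 2) =>
    if n % 2 = 0 then upSet (Kseq V (n + 1) \ V) else upSet (Kseq V (n + 1) ∩ V)

section AltSeq

variable {P : Type*} [PartialOrder P] {S : Set P} {p q : P} {n : ℕ}

lemma HasAltSeq.pos (h : HasAltSeq S p n) : 0 < n := by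
  obtain ⟨c, -, -, h, -⟩ := h; exact h

lemma HasAltSeq.mem_last (h : HasAltSeq S p n) : p ∈ S ↔ (n - 1) % 2 = 0 := by
  obtain ⟨c, -, hmem, hpos, hlast⟩ := h
  rw [← hlast]; exact hmem _

lemma HasAltSeq.exists_first (h : HasAltSeq S p n) : ∃ s ∈ S, s ≤ p := by
  obtain ⟨c, hmono, hmem, hpos, hlast⟩ := h
  refine ⟨c ⟨0, hpos⟩, (hmem _).2 rfl, ?_⟩
  rw [← hlast]
  exact hmono.monotone (by simp [Fin.mk_le_mk])

lemma hasAltSeq_one_s12 {x : P} (hx : x ∈ S) : HasAltSeq S x 1 := by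
  refine ⟨fun _ => x, ?_, ?_, ⟨one_pos, rfl⟩⟩
  · intro i j hij
    have hi := i.isLt; have hj := j.isLt
    have : i.val < j.val := hij
    omega
  · intro i
    have hi := i.isLt
    simpa [show i.val = 0 by omega] using hx

lemma hasAltSeq_two_s12 {s x : P} (hs : s ∈ S) (hx : x ∉ S) (hsx : s < x) :
    HasAltSeq S x 2 := by
  refine ⟨fun i => if i.val = 0 then s else x, ?_, ?_, ⟨by omega, ?_⟩⟩
  · intro i j hij
    have hi := i.isLt; have hj := j.isLt
    have hij' : i.val < j.val := hij
    have h1 : i.val = 0 := by omega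
    have h2 : j.val = 1 := by omega
    simp [h1, h2, hsx]
  · intro i
    have hi := i.isLt
    rcases (by omega : i.val = 0 ∨ i.val = 1) with h | h <;> simp [h, hs, hx]
  · norm_num

lemma HasAltSeq.append (h : HasAltSeq S p n) (hpq : p < q) (hq : q ∈ S ↔ n % 2 = 0) :
    HasAltSeq S q (n + 1) := by
  obtain ⟨c, hmono, hmem, hpos, hlast⟩ := h
  have hle : ∀ (i : ℕ) (hi : i < n), c ⟨i, hi⟩ ≤ p := by
    intro i hi
    rw [← hlast]
    exact hmono.monotone (by simp [Fin.mk_le_mk]; omega)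
  refine ⟨fun i => if hi : i.val < n then c ⟨i.val, hi⟩ else q, ?_, ?_, ⟨by omega, ?_⟩⟩
  · intro i j hij
    have hij' : i.val < j.val := hij
    have hj' := j.isLt
    by_cases hj : j.val < n
    · have hi : i.val < n := by omega
      simp only [dif_pos hi, dif_pos hj]
      exact hmono (show (⟨i.val, hi⟩ : Fin n) < ⟨j.val, hj⟩ from hij')
    · have hi : i.val < n := by omega
      simp only [dif_pos hi, dif_neg hj]
      exact lt_of_le_of_lt (hle _ hi) hpq
  · intro i
    by_cases hi : i.val < n
    · simpa [dif_pos hi] using hmem ⟨i.val, hi⟩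
    · have hin : i.val = n := by have := i.isLt; omega
      simp [dif_neg hi, hq, hin]
  · simp

lemma HasAltSeq.replace (h : HasAltSeq S p n) (hpq : p ≤ q) (hq : q ∈ S ↔ p ∈ S) :
    HasAltSeq S q n := by
  obtain ⟨c, hmono, hmem, hpos, hlast⟩ := h
  refine ⟨fun i => if i.val = n - 1 then q else c i, ?_, ?_, ⟨hpos, ?_⟩⟩
  · intro i j hij
    have hij' : i.val < j.val := hij
    have hj' := j.isLt
    by_cases hj : j.val = n - 1
    · have hi : ¬ i.val = n - 1 := by omega
      simp only [if_pos hj, if_neg hi]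
      calc c i < c ⟨n - 1, by omega⟩ := hmono (show i < _ from by
              rw [Fin.lt_def]; simpa using (by omega : i.val < n - 1))
        _ = p := hlast
        _ ≤ q := hpq
    · have hi : ¬ i.val = n - 1 := by omega
      simp only [if_neg hi, if_neg hj]
      exact hmono hij
  · intro i
    by_cases hi : i.val = n - 1
    · have hp : p ∈ S ↔ (n - 1) % 2 = 0 := by rw [← hlast]; exact hmem _
      simp [if_pos hi, hq, hp, hi]
    · simp [if_neg hi, hmem i]
  · simp

lemma HasAltSeq.shrink (h : HasAltSeq S p n) {j : ℕ} (hj1 : 1 ≤ j) (hjn : j ≤ n)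
    (hpar : j % 2 = n % 2) : HasAltSeq S p j := by
  obtain ⟨c, hmono, hmem, hpos, hlast⟩ := h
  refine ⟨fun i => c ⟨n - j + i.val, by have := i.isLt; omega⟩, ?_, ?_, ⟨by omega, ?_⟩⟩
  · intro i i' hii
    have : i.val < i'.val := hii
    exact hmono (show _ < _ from by rw [Fin.lt_def]; simpa using (by omega : n - j + i.val < n - j + i'.val))
  · intro i
    rw [hmem]
    have := i.isLt
    show (n - j + i.val) % 2 = 0 ↔ i.val % 2 = 0
    omega
  · rw [← hlast]
    exact congrArg c (Fin.ext (by simp; omega))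

lemma HasAltSeq.dropLast (h : HasAltSeq S p n) (h2 : 2 ≤ n) :
    ∃ q, q < p ∧ HasAltSeq S q (n - 1) := by
  obtain ⟨c, hmono, hmem, hpos, hlast⟩ := h
  refine ⟨c ⟨n - 2, by omega⟩, ?_, ?_⟩
  · rw [← hlast]
    exact hmono (show _ < _ from by rw [Fin.lt_def]; simpa using (by omega : n - 2 < n - 1))
  · refine ⟨fun i => c ⟨i.val, by have := i.isLt; omega⟩, ?_, ?_, ⟨by omega, ?_⟩⟩
    · intro i i' hii
      have : i.val < i'.val := hii
      exact hmono (show _ < _ from by rw [Fin.lt_def]; simpa using this)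
    · intro i; exact hmem _
    · exact congrArg c (Fin.ext (by simp; omega))

end AltSeq

lemma upSet_isUpper {X : Type*} [Preorder X] (S : Set X) : IsUpperSet (upSet S) :=
  fun _ _ hab ⟨s, hs, hsa⟩ => ⟨s, hs, hsa.trans hab⟩

lemma kchar {X : Type*} [PartialOrder X] (V : Set X) :
    ∀ n, Kseq V (n + 1) = {x | ∃ k, n + 1 ≤ k ∧ HasAltSeq V x k} := by
  intro n
  induction n with
  | zero =>
    show upSet V = _
    ext x
    constructor
    · rintro ⟨s, hs, hsx⟩
      by_cases hx : x ∈ V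
      · exact ⟨1, le_refl _, hasAltSeq_one_s12 hx⟩
      · have hslt : s < x := hsx.lt_of_ne (fun h => hx (h ▸ hs))
        exact ⟨2, by omega, hasAltSeq_two_s12 hs hx hslt⟩
    · rintro ⟨k, hk, hseq⟩
      obtain ⟨s, hs, hsx⟩ := hseq.exists_first
      exact ⟨s, hs, hsx⟩
  | succ n ih =>
    show (if n % 2 = 0 then upSet (Kseq V (n + 1) \ V) else upSet (Kseq V (n + 1) ∩ V)) = _
    by_cases hpar : n % 2 = 0
    · rw [if_pos hpar, ih]
      ext x
      constructor
      · rintro ⟨s, ⟨⟨k, hk, hseq⟩, hsV⟩, hsx⟩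
        have hkpos := hseq.pos
        have hml := hseq.mem_last
        have hke : k % 2 = 0 := by
          by_contra hh
          exact hsV (hml.2 (by omega))
        have hk2 : n + 2 ≤ k := by omega
        by_cases hx : x ∈ V
        · have hslt : s < x := hsx.lt_of_ne (fun h => hsV (h ▸ hx))
          exact ⟨k + 1, by omega, hseq.append hslt (iff_of_true hx hke)⟩
        · exact ⟨k, hk2, hseq.replace hsx (iff_of_false hx hsV)⟩
      · rintro ⟨k, hk, hseq⟩
        by_cases hke : k % 2 = 0
        · have hxV : x ∉ V := fun hx => by
            have := hseq.mem_last.1 hx; omega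
          exact ⟨x, ⟨⟨k, by omega, hseq⟩, hxV⟩, le_refl x⟩
        · obtain ⟨q, hqx, hq⟩ := hseq.dropLast (by omega)
          have hqV : q ∉ V := fun h => by
            have := hq.mem_last.1 h; omega
          exact ⟨q, ⟨⟨k - 1, by omega, hq⟩, hqV⟩, le_of_lt hqx⟩
    · rw [if_neg hpar, ih]
      ext x
      constructor
      · rintro ⟨s, ⟨⟨k, hk, hseq⟩, hsV⟩, hsx⟩
        have hkpos := hseq.pos
        have hml := hseq.mem_last
        have hko : ¬ k % 2 = 0 := by
          have := hml.1 hsV; omega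
        have hk2 : n + 2 ≤ k := by omega
        by_cases hx : x ∈ V
        · exact ⟨k, hk2, hseq.replace hsx (iff_of_true hx hsV)⟩
        · have hslt : s < x := lt_of_le_of_ne hsx (fun h => hx (h ▸ hsV))
          exact ⟨k + 1, by omega, hseq.append hslt (iff_of_false hx hko)⟩
      · rintro ⟨k, hk, hseq⟩
        by_cases hke : k % 2 = 0
        · obtain ⟨q, hqx, hq⟩ := hseq.dropLast (by omega)
          have hqV : q ∈ V := hq.mem_last.2 (by omega)
          exact ⟨q, ⟨⟨k - 1, by omega, hq⟩, hqV⟩, le_of_lt hqx⟩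
        · have hxV : x ∈ V := hseq.mem_last.2 (by omega)
          exact ⟨x, ⟨⟨k, by omega, hseq⟩, hxV⟩, le_refl x⟩

lemma kmono {X : Type*} [PartialOrder X] (V : Set X) (n : ℕ) :
    Kseq V (n + 2) ⊆ Kseq V (n + 1) := by
  rw [show n + 2 = (n + 1) + 1 from rfl, kchar, kchar]
  rintro x ⟨k, hk, h⟩
  exact ⟨k, by omega, h⟩

lemma kupper {X : Type*} [PartialOrder X] (V : Set X) (n : ℕ) :
    IsUpperSet (Kseq V (n + 1)) := by
  cases n with
  | zero => exact upSet_isUpper V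
  | succ n =>
    show IsUpperSet (if n % 2 = 0 then upSet (Kseq V (n + 1) \ V) else upSet (Kseq V (n + 1) ∩ V))
    split <;> exact upSet_isUpper _

section Top

variable {X : Type*} [PartialOrder X] [TopologicalSpace X] [CompactSpace X] [PriestleySpace X]

lemma isClosed_Iic_priestley (y : X) : IsClosed (Set.Iic y) := by
  rw [← isOpen_compl_iff, isOpen_iff_mem_nhds]
  intro x hx
  obtain ⟨U, hU, hUup, hxU, hyU⟩ :=
    exists_isClopen_upper_of_not_le (show ¬ x ≤ y from hx)
  refine Filter.mem_of_superset (hU.isOpen.mem_nhds hxU) ?_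
  intro z hzU hzy
  exact hyU (hUup hzy hzU)

lemma isClosed_upSet_of_isCompact {S : Set X} (hS : IsCompact S) : IsClosed (upSet S) := by
  rw [← isOpen_compl_iff, isOpen_iff_mem_nhds]
  intro x hx
  have h : ∀ s ∈ S, ∃ U : Set X, IsClopen U ∧ IsUpperSet U ∧ s ∈ U ∧ x ∉ U := by
    intro s hs
    exact exists_isClopen_upper_of_not_le (fun hle => hx ⟨s, hs, hle⟩)
  choose! U hUc hUu hsU hxU using h
  obtain ⟨t, htS, htfin, hcover⟩ :=
    hS.elim_finite_subcover_image (fun s hs => (hUc s hs).isOpen)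
      (fun s hs => Set.mem_biUnion hs (hsU s hs))
  have hWclosed : IsClosed (⋃ i ∈ t, U i) :=
    htfin.isClosed_biUnion (fun i hi => (hUc i (htS hi)).isClosed)
  refine Filter.mem_of_superset (hWclosed.isOpen_compl.mem_nhds ?_) ?_
  · simp only [Set.mem_compl_iff, Set.mem_iUnion]
    rintro ⟨i, hi, hxi⟩
    exact hxU i (htS hi) hxi
  · intro z hz hzup
    obtain ⟨s, hs, hsz⟩ := hzup
    obtain ⟨i, hi, hsi⟩ := Set.mem_iUnion₂.1 (hcover hs)
    exact hz (Set.mem_biUnion hi (hUu i (htS hi) hsz hsi))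

lemma kclosed {V : Set X} (hV : IsClopen V) (n : ℕ) : IsClosed (Kseq V (n + 1)) := by
  induction n with
  | zero => exact isClosed_upSet_of_isCompact hV.isClosed.isCompact
  | succ n ih =>
    show IsClosed (if n % 2 = 0 then upSet (Kseq V (n + 1) \ V) else upSet (Kseq V (n + 1) ∩ V))
    split
    · exact isClosed_upSet_of_isCompact ((ih.sdiff hV.isOpen).isCompact)
    · exact isClosed_upSet_of_isCompact ((ih.inter hV.isClosed).isCompact)

lemma no_alt_chain {V : Set X} (hV : IsClopen V) (d : ℕ → X) (hd : Antitone d)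
    (hmem : ∀ n, d n ∈ V ↔ n % 2 = 0) : False := by
  have key : ∀ r : ℕ, ∃ z, (∀ i, z ≤ d i) ∧ z ∈ closure (d '' {j | j % 2 = r % 2}) := by
    intro r
    obtain ⟨z, hz⟩ := IsCompact.nonempty_iInter_of_sequence_nonempty_isCompact_isClosed
      (fun i => closure (d '' {j | i ≤ j ∧ j % 2 = r % 2}))
      (fun i => closure_mono (Set.image_mono (fun j hj => ⟨Nat.le_of_succ_le hj.1, hj.2⟩)))
      (fun i => (Set.Nonempty.image d ⟨2 * i + r % 2, by constructor <;> omega⟩).closure)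
      isClosed_closure.isCompact (fun i => isClosed_closure)
    rw [Set.mem_iInter] at hz
    refine ⟨z, fun i => ?_, ?_⟩
    · have : closure (d '' {j | i ≤ j ∧ j % 2 = r % 2}) ⊆ Set.Iic (d i) := by
        refine closure_minimal ?_ (isClosed_Iic_priestley (d i))
        rintro _ ⟨j, ⟨hij, -⟩, rfl⟩
        exact hd hij
      exact this (hz i)
    · refine closure_mono (Set.image_mono (fun j hj => hj.2)) (hz 0)
  obtain ⟨z0, hz0le, hz0cl⟩ := key 0
  obtain ⟨z1, hz1le, hz1cl⟩ := key 1
  have hz0V : z0 ∈ V := by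
    refine closure_minimal ?_ hV.isClosed hz0cl
    rintro _ ⟨j, hj, rfl⟩
    exact (hmem j).2 (by simpa using hj)
  have hz1V : z1 ∉ V := by
    have : z1 ∈ Vᶜ := by
      refine closure_minimal ?_ hV.compl.isClosed hz1cl
      rintro _ ⟨j, hj, rfl⟩
      intro hjV
      have := (hmem j).1 hjV
      simp only [Set.mem_setOf_eq] at hj
      omega
    exact this
  have h01 : z0 ≤ z1 := by
    by_contra hle
    obtain ⟨U, hU, hUup, h0U, h1U⟩ := exists_isClopen_upper_of_not_le hle
    obtain ⟨w, hwU, j, -, rfl⟩ :=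
      mem_closure_iff.1 hz1cl Uᶜ hU.isClosed.isOpen_compl h1U
    exact hwU (hUup (hz0le j) h0U)
  have h10 : z1 ≤ z0 := by
    by_contra hle
    obtain ⟨U, hU, hUup, h1U, h0U⟩ := exists_isClopen_upper_of_not_le hle
    obtain ⟨w, hwU, j, -, rfl⟩ :=
      mem_closure_iff.1 hz0cl Uᶜ hU.isClosed.isOpen_compl h0U
    exact hwU (hUup (hz1le j) h1U)
  exact hz1V (h01.antisymm h10 ▸ hz0V)

lemma deg_bdd {V : Set X} (hV : IsClopen V) (x : X) (hx : x ∈ V) :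
    ∃ N, ∀ k, HasAltSeq V x k → k ≤ N := by
  classical
  by_contra hcon
  push_neg at hcon
  have hxK : ∀ n, x ∈ Kseq V (n + 1) := by
    intro n
    rw [kchar]
    obtain ⟨k, hk, hlt⟩ := hcon n
    exact ⟨k, by omega, hk⟩
  have hxF : x ∈ ⋂ n, Kseq V (n + 1) := Set.mem_iInter.2 hxK
  have descend : ∀ y ∈ ⋂ n, Kseq V (n + 1),
      ∃ s, s ≤ y ∧ s ∈ (⋂ n, Kseq V (n + 1)) ∧ (s ∈ V ↔ y ∉ V) := by
    intro y hy
    rw [Set.mem_iInter] at hy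
    set W := if y ∈ V then Vᶜ else V with hWdef
    have hWclosed : IsClosed W := by
      rw [hWdef]; split
      · exact hV.compl.isClosed
      · exact hV.isClosed
    have hne : ∀ i, (Set.Iic y ∩ (Kseq V (i + 1) ∩ W)).Nonempty := by
      intro i
      have hyK := hy (i + 2)
      rw [kchar] at hyK
      obtain ⟨k, hk, hseq⟩ := hyK
      obtain ⟨q, hqy, hq⟩ := hseq.dropLast (by omega)
      have hqmem := hq.mem_last
      have hymem := hseq.mem_last
      have hqK : q ∈ Kseq V (i + 1) := by
        rw [kchar]; exact ⟨k - 1, by omega, hq⟩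
      refine ⟨q, hqy.le, hqK, ?_⟩
      rw [hWdef]
      by_cases hyV : y ∈ V
      · rw [if_pos hyV]
        intro hqV
        have h1 := hymem.1 hyV
        have h2 := hqmem.1 hqV
        omega
      · rw [if_neg hyV]
        refine hqmem.2 ?_
        have : ¬ (k - 1) % 2 = 0 := fun h => hyV (hymem.2 h)
        omega
    obtain ⟨s, hs⟩ := IsCompact.nonempty_iInter_of_sequence_nonempty_isCompact_isClosed
      (fun i => Set.Iic y ∩ (Kseq V (i + 1) ∩ W))
      (fun i => Set.inter_subset_inter_right _ (Set.inter_subset_inter_left _ (kmono V i)))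
      hne
      (((isClosed_Iic_priestley y).inter ((kclosed hV 0).inter hWclosed)).isCompact)
      (fun i => (isClosed_Iic_priestley y).inter ((kclosed hV i).inter hWclosed))
    rw [Set.mem_iInter] at hs
    refine ⟨s, (hs 0).1, Set.mem_iInter.2 (fun i => (hs i).2.1), ?_⟩
    have hsW := (hs 0).2.2
    rw [hWdef] at hsW
    by_cases hyV : y ∈ V
    · rw [if_pos hyV] at hsW
      exact iff_of_false hsW (fun h => h hyV)
    · rw [if_neg hyV] at hsW
      exact iff_of_true hsW hyV
  let g : {y : X // y ∈ ⋂ n, Kseq V (n + 1)} → {y : X // y ∈ ⋂ n, Kseq V (n + 1)} :=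
    fun y => ⟨(descend y.1 y.2).choose, (descend y.1 y.2).choose_spec.2.1⟩
  let d : ℕ → {y : X // y ∈ ⋂ n, Kseq V (n + 1)} := fun n => g^[n] ⟨x, hxF⟩
  have hiter : ∀ n, d (n + 1) = g (d n) := by
    intro n
    simp only [d, Function.iterate_succ_apply']
  have hstep : ∀ n, (d (n + 1)).1 ≤ (d n).1 ∧ ((d (n + 1)).1 ∈ V ↔ (d n).1 ∉ V) := by
    intro n
    rw [hiter n]
    exact ⟨(descend (d n).1 (d n).2).choose_spec.1,
      (descend (d n).1 (d n).2).choose_spec.2.2⟩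
  have hdm : ∀ n, (d n).1 ∈ V ↔ n % 2 = 0 := by
    intro n
    induction n with
    | zero => simpa [d] using hx
    | succ n ih =>
      rw [(hstep n).2]
      constructor
      · intro h
        by_contra hne
        exact h (ih.2 (by omega))
      · intro h hin
        have := ih.1 hin
        omega
  exact no_alt_chain hV (fun n => (d n).1)
    (antitone_nat_of_succ_le (fun n => (hstep n).1)) hdm

end Top

theorem stmt12 {X : Type*} [PartialOrder X] [TopologicalSpace X]
    [CompactSpace X] [PriestleySpace X] (V : Set X) (hV : IsClopen V)
    (m : ℕ) (hm : ∃ x ∈ V, DegEq V x (2 * m - 1))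
    (hmax : ∀ x ∈ V, ∀ k, DegEq V x k → k ≤ 2 * m - 1) (hm1 : 1 ≤ m) :
    (∀ n, 1 ≤ n → (IsClosed (Kseq V n) ∧ IsUpperSet (Kseq V n)) ∧
        Kseq V (n + 1) ⊆ Kseq V n ∧
        Kseq V n = {x : X | ∃ k, n ≤ k ∧ HasAltSeq V x k}) ∧
    V = ⋃ i : Fin m, (Kseq V (2 * i.val + 1) \ Kseq V (2 * i.val + 2)) := by
  classical
  constructor
  · intro n hn
    obtain ⟨k, rfl⟩ : ∃ k, n = k + 1 := ⟨n - 1, by omega⟩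
    exact ⟨⟨kclosed hV k, kupper V k⟩, kmono V k, kchar V k⟩
  · ext x
    simp only [Set.mem_iUnion]
    constructor
    · intro hxV
      obtain ⟨N0, hN0⟩ := deg_bdd hV x hxV
      have h1 : HasAltSeq V x 1 := hasAltSeq_one_s12 hxV
      set N := Nat.findGreatest (HasAltSeq V x) N0 with hN
      have hN1 : 1 ≤ N := Nat.le_findGreatest (hN0 1 h1) h1
      have hNseq : HasAltSeq V x N := Nat.findGreatest_spec (hN0 1 h1) h1
      have hmaxN : ∀ k, HasAltSeq V x k → k ≤ N :=
        fun k hk => Nat.le_findGreatest (hN0 k hk) hk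
      have hNle : N ≤ 2 * m - 1 := hmax x hxV N ⟨Or.inr hNseq, hmaxN⟩
      have hNodd : N % 2 = 1 := by
        have := hNseq.mem_last.1 hxV
        omega
      refine ⟨⟨N / 2, by omega⟩, ?_, ?_⟩
      · have h2 : 2 * (N / 2) + 1 = (2 * (N / 2)) + 1 := rfl
        rw [kchar V (2 * (N / 2))]
        exact ⟨N, by omega, hNseq⟩
      · rw [show 2 * (N / 2) + 2 = (2 * (N / 2) + 1) + 1 from rfl, kchar V (2 * (N / 2) + 1)]
        rintro ⟨k, hk, hkseq⟩
        have := hmaxN k hkseq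
        omega
    · rintro ⟨i, hxi⟩
      rw [show 2 * i.val + 2 = (2 * i.val + 1) + 1 from rfl, kchar V (2 * i.val + 1),
        kchar V (2 * i.val)] at hxi
      obtain ⟨⟨k, hk, hseq⟩, hnot⟩ := hxi
      have hke : k = 2 * i.val + 1 := by
        by_contra hne
        exact hnot ⟨k, by omega, hseq⟩
      exact hseq.mem_last.2 (by omega)
end

section
/- Every element of the Booleanization D⁻ of a finite distributive lattice D can be written as a difference chain a₁ \ (a₂ \ (… \ (a_{2m-1} \ a_{2m})…)) with a₁ ≥ a₂ ≥ … ≥ a_{2m} elements of D. -/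
/-!
Every element of `D⁻` is a finite join of differences `u \ v` with `u, v ∈ D`. For a chain
`a₁ ≥ a₂ ≥ … ≥ a₂ₘ` the nested difference equals `(a₁ \ a₂) ⊔ (a₃ \ a₄) ⊔ …`, because
`x \ (y \ z) = (x \ y) ⊔ z` whenever `z ≤ x`. So it suffices to see that the join of such a
layered chain in `D` with one more difference `u \ v` (where `v ≤ u`) is again a layered chain
in `D`: replace the top layer `a \ b` by `(a ⊔ u) \ ((b ⊔ u) ⊓ (a ⊔ v))`, which together with
`(a ⊓ u) \ (b ⊓ v)` covers exactly `(a \ b) ⊔ (u \ v)`, and insert the latter difference into the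
remaining layers recursively.
-/

/-- The right-nested iterated difference `a₁ \ (a₂ \ (… \ (aₙ₋₁ \ aₙ)…))` of a list. -/
def iterDiff {B : Type*} [BooleanAlgebra B] : List B → B
  | [] => ⊥
  | [x] => x
  | x :: y :: xs => x \ iterDiff (y :: xs)

section SdiffPairs

variable {B : Type*} [BooleanAlgebra B]

def sdiffPairsSup : List B → B
  | [] => ⊥
  | [x] => x
  | x :: y :: xs => (x \ y) ⊔ sdiffPairsSup xs

theorem iterDiff_cons_le (x : B) : ∀ L : List B, iterDiff (x :: L) ≤ x
  | [] => le_rfl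
  | _ :: _ => sdiff_le

theorem iterDiff_eq_sdiffPairsSup :
    ∀ L : List B, L.IsChain (· ≥ ·) → Even L.length → iterDiff L = sdiffPairsSup L
  | [], _, _ => rfl
  | [_], _, he => by simp at he
  | [x, y], _, _ => by simp [iterDiff, sdiffPairsSup]
  | x :: y :: z :: xs, hc, he => by
    obtain ⟨hyx, hzy, hc⟩ : y ≤ x ∧ z ≤ y ∧ (z :: xs).IsChain (· ≥ ·) := by
      simpa only [List.isChain_cons_cons] using hc
    have hrest : iterDiff (z :: xs) ≤ x := (iterDiff_cons_le z xs).trans (hzy.trans hyx)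
    calc iterDiff (x :: y :: z :: xs) = x \ (y \ iterDiff (z :: xs)) := rfl
      _ = x \ y ⊔ iterDiff (z :: xs) := sdiff_sdiff_eq_sdiff_sup hrest
      _ = sdiffPairsSup (x :: y :: z :: xs) := by
        rw [iterDiff_eq_sdiffPairsSup _ hc (by simpa [parity_simps] using he)]; rfl

def insertSdiff (u v : B) : List B → List B
  | [] => [u, u ⊓ v]
  | [x] => [x]
  | a :: b :: xs => (a ⊔ u) :: ((b ⊔ u) ⊓ (a ⊔ v)) :: insertSdiff (a ⊓ u) (b ⊓ v) xs

theorem sup_sdiff_inf_sup_sdiff_inf (a b u v : B) :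
    (a ⊔ u) \ ((b ⊔ u) ⊓ (a ⊔ v)) ⊔ (a ⊓ u) \ (b ⊓ v) = u \ v ⊔ a \ b :=
  calc (a ⊔ u) \ ((b ⊔ u) ⊓ (a ⊔ v)) ⊔ (a ⊓ u) \ (b ⊓ v)
      = ((a \ b) \ u ⊔ (u \ v) \ a) ⊔ (u ⊓ (a \ b) ⊔ a ⊓ (u \ v)) := by
        have hleft : (a ⊔ u) \ ((b ⊔ u) ⊓ (a ⊔ v)) = (a \ b) \ u ⊔ (u \ v) \ a := by
          rw [sdiff_inf, sup_sdiff, sup_sdiff, sdiff_eq_bot_iff.2 le_sup_right,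
            sdiff_eq_bot_iff.2 le_sup_left, sup_bot_eq, bot_sup_eq, sdiff_sdiff_left,
            sdiff_sdiff_left, sup_comm v]
        rw [hleft, sdiff_inf, inf_sdiff_assoc a u v, inf_comm a u, inf_sdiff_assoc]
    _ = (u ⊓ (a \ b) ⊔ (a \ b) \ u) ⊔ (a ⊓ (u \ v) ⊔ (u \ v) \ a) := by ac_rfl
    _ = u \ v ⊔ a \ b := by
        rw [inf_comm, sup_inf_sdiff, inf_comm a, sup_inf_sdiff, sup_comm]

theorem sdiffPairsSup_insertSdiff (u v : B) :
    ∀ L : List B, Even L.length → sdiffPairsSup (insertSdiff u v L) = u \ v ⊔ sdiffPairsSup L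
  | [], _ => by simp [insertSdiff, sdiffPairsSup]
  | [_], he => by simp at he
  | a :: b :: xs, he => by
    calc sdiffPairsSup (insertSdiff u v (a :: b :: xs))
        = (a ⊔ u) \ ((b ⊔ u) ⊓ (a ⊔ v)) ⊔ sdiffPairsSup (insertSdiff (a ⊓ u) (b ⊓ v) xs) := rfl
      _ = (a ⊔ u) \ ((b ⊔ u) ⊓ (a ⊔ v)) ⊔ ((a ⊓ u) \ (b ⊓ v) ⊔ sdiffPairsSup xs) := by
        rw [sdiffPairsSup_insertSdiff _ _ xs (by simpa [parity_simps] using he)]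
      _ = u \ v ⊔ sdiffPairsSup (a :: b :: xs) := by
        rw [← sup_assoc, sup_sdiff_inf_sup_sdiff_inf, sup_assoc]; rfl

theorem even_length_insertSdiff (u v : B) :
    ∀ L : List B, Even L.length → Even (insertSdiff u v L).length
  | [], _ => by simp [insertSdiff]
  | [_], he => by simp at he
  | a :: b :: xs, he => by
    simpa [insertSdiff, parity_simps] using
      even_length_insertSdiff (a ⊓ u) (b ⊓ v) xs (by simpa [parity_simps] using he)

theorem insertSdiff_mem {D : Set B} (hinf : ∀ a ∈ D, ∀ b ∈ D, a ⊓ b ∈ D)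
    (hsup : ∀ a ∈ D, ∀ b ∈ D, a ⊔ b ∈ D) {u v : B} (hu : u ∈ D) (hv : v ∈ D) :
    ∀ L : List B, (∀ x ∈ L, x ∈ D) → ∀ x ∈ insertSdiff u v L, x ∈ D
  | [], _ => by simp [insertSdiff, hu, hinf u hu v hv]
  | [_], hL => hL
  | a :: b :: xs, hL => by
    simp only [List.mem_cons, forall_eq_or_imp] at hL
    obtain ⟨ha, hb, hxs⟩ := hL
    simp only [insertSdiff, List.mem_cons, forall_eq_or_imp]
    exact ⟨hsup a ha u hu, hinf _ (hsup b hb u hu) _ (hsup a ha v hv),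
      insertSdiff_mem hinf hsup (hinf a ha u hu) (hinf b hb v hv) xs hxs⟩

theorem isChain_cons_insertSdiff :
    ∀ {u v w : B}, v ≤ u → u ≤ w → ∀ L : List B, (w :: L).IsChain (· ≥ ·) →
      (w :: insertSdiff u v L).IsChain (· ≥ ·)
  | u, v, w, hvu, huw, [], _ => by
    simp [insertSdiff, List.isChain_cons_cons, huw]
  | _, _, _, _, _, [_], hL => hL
  | u, v, w, hvu, huw, a :: b :: xs, hL => by
    obtain ⟨haw, hba, hxs⟩ : a ≤ w ∧ b ≤ a ∧ (b :: xs).IsChain (· ≥ ·) := by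
      simpa only [List.isChain_cons_cons] using hL
    have hb : b ≤ (b ⊔ u) ⊓ (a ⊔ v) := le_inf le_sup_left (hba.trans le_sup_left)
    refine List.isChain_cons_cons.2 ⟨sup_le haw huw, List.isChain_cons_cons.2
      ⟨inf_le_left.trans (sup_le_sup_right hba u), ?_⟩⟩
    exact isChain_cons_insertSdiff (inf_le_inf hba hvu)
      (le_inf (inf_le_right.trans le_sup_right) (inf_le_left.trans le_sup_left)) xs
      (hxs.imp_head (·.trans hb))

theorem isChain_insertSdiff {u v : B} (hvu : v ≤ u) {L : List B} (hL : L.IsChain (· ≥ ·)) :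
    (insertSdiff u v L).IsChain (· ≥ ·) :=
  (isChain_cons_insertSdiff hvu le_top L (List.isChain_cons.2 ⟨fun _ _ => le_top, hL⟩)).tail

theorem exists_chain_finset_sup_sdiff_eq {ι : Type*} {D : Set B}
    (hinf : ∀ a ∈ D, ∀ b ∈ D, a ⊓ b ∈ D) (hsup : ∀ a ∈ D, ∀ b ∈ D, a ⊔ b ∈ D)
    {u v : ι → B} (huv : ∀ i, u i ∈ D ∧ v i ∈ D) (s : Finset ι) :
    ∃ L : List B, (∀ x ∈ L, x ∈ D) ∧ L.IsChain (· ≥ ·) ∧ Even L.length ∧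
      s.sup (fun i => u i \ v i) = sdiffPairsSup L := by
  classical
  induction s using Finset.induction_on with
  | empty => exact ⟨[], by simp, .nil, .zero, rfl⟩
  | insert i s _ ih =>
    obtain ⟨L, hD, hc, he, hL⟩ := ih
    refine ⟨insertSdiff (u i) (u i ⊓ v i) L,
      insertSdiff_mem hinf hsup (huv i).1 (hinf _ (huv i).1 _ (huv i).2) L hD,
      isChain_insertSdiff inf_le_left hc, even_length_insertSdiff _ _ L he, ?_⟩
    rw [Finset.sup_insert, hL, sdiffPairsSup_insertSdiff _ _ L he, sdiff_inf_self_left]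

end SdiffPairs

theorem List.exists_antitone_ofFn_eq {α : Type*} [Preorder α] {L : List α}
    (hc : L.IsChain (· ≥ ·)) (he : Even L.length) :
    ∃ (m : ℕ) (a : Fin (2 * m) → α), Antitone a ∧ List.ofFn a = L := by
  obtain ⟨m, hm⟩ := he
  have hofFn : List.ofFn (fun i : Fin (2 * m) => L[i.1]'(by omega)) = L :=
    List.ext_getElem (by simp; omega) (by simp)
  refine ⟨m, _, ?_, hofFn⟩
  rw [← List.sortedGE_ofFn_iff, hofFn, List.sortedGE_iff_pairwise, ← List.isChain_iff_pairwise]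
  exact hc

theorem stmt14_general {B : Type*} [BooleanAlgebra B] (D : Set B)
    (hinf : ∀ a ∈ D, ∀ b ∈ D, a ⊓ b ∈ D) (hsup : ∀ a ∈ D, ∀ b ∈ D, a ⊔ b ∈ D)
    (hgen : ∀ b : B, ∃ (n : ℕ) (u v : Fin n → B),
      (∀ i, u i ∈ D ∧ v i ∈ D) ∧ b = (Finset.univ : Finset (Fin n)).sup (fun i => u i \ v i)) :
    ∀ b : B, ∃ (m : ℕ) (a : Fin (2 * m) → B),
      (∀ i, a i ∈ D) ∧ Antitone a ∧ b = iterDiff (List.ofFn a) := by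
  intro b
  obtain ⟨n, u, v, huv, rfl⟩ := hgen b
  obtain ⟨L, hD, hc, he, hL⟩ := exists_chain_finset_sup_sdiff_eq hinf hsup huv Finset.univ
  obtain ⟨m, a, ha, rfl⟩ := List.exists_antitone_ofFn_eq hc he
  exact ⟨m, a, fun i => hD _ (List.mem_ofFn.2 ⟨i, rfl⟩), ha,
    by rw [hL, iterDiff_eq_sdiffPairsSup _ hc he]⟩

/-- Every element of the Booleanization `B = D⁻` of a finite distributive lattice `D`
(a finite bounded sublattice of `B` generating `B` as a Boolean algebra) can be written
as a difference chain `a₁ \ (a₂ \ (… \ (a₂ₘ₋₁ \ a₂ₘ)…))` with `a₁ ≥ … ≥ a₂ₘ` in `D`. -/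
theorem stmt14 {B : Type*} [BooleanAlgebra B] (D : Set B) (hfin : D.Finite)
    (hbot : ⊥ ∈ D) (htop : ⊤ ∈ D)
    (hinf : ∀ a ∈ D, ∀ b ∈ D, a ⊓ b ∈ D) (hsup : ∀ a ∈ D, ∀ b ∈ D, a ⊔ b ∈ D)
    (hgen : ∀ b : B, ∃ (n : ℕ) (u v : Fin n → B),
      (∀ i, u i ∈ D ∧ v i ∈ D) ∧ b = (Finset.univ : Finset (Fin n)).sup (fun i => u i \ v i)) :
    ∀ b : B, ∃ (m : ℕ) (a : Fin (2 * m) → B),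
      (∀ i, a i ∈ D) ∧ Antitone a ∧ b = iterDiff (List.ofFn a) :=
  stmt14_general D hinf hsup hgen
end

section
/- Let B be a Boolean algebra, D a bounded sublattice of B generating B as a Boolean algebra (so B is the Booleanization of D), and B' a Boolean subalgebra of B. Suppose there is a family of closure operators cᵢ on B (i ranging over a directed index set, each cᵢ = gᵢfᵢ for an adjunction into a meet-semilattice with Im(gᵢ) ⊆ Im(gⱼ) for i ≤ j and ⋃ᵢ Im(gᵢ) = D) such that B' is closed under each cᵢ. Then the Boolean subalgebra of B generated by D ∩ B' equals D⁻ ∩ B', where D⁻ is the Boolean subalgebra generated by D. In particular the left-to-right containment (D ∩ B')⁻ ⊆ D⁻ ∩ B' always holds. -/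
/-!
Every element of the Boolean algebra generated by a bounded sublattice `D` is a difference chain
`a₁ \ (a₂ \ (⋯ \ aₙ))` with all `aᵢ ∈ D`: such chains are closed under `∆` with elements of `D`,
hence under `∆` and `⊓`, so they form a Boolean subalgebra.

Let `x = a \ y ∈ B'` be such a chain, `a = gᵢ s`. The hull `w = cᵢ x` lies in `D ∩ B'` and
`x ≤ w ≤ a`, so `x = w \ (w ⊓ y)` where `w ⊓ y ∈ B'` is again a chain over `D`, of shorter length.
By induction, `x` lies in the Boolean algebra generated by `D ∩ B'`.
-/

/-- `T` is a Boolean subalgebra of the Boolean algebra `B`. -/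
def IsBoolSubalg {B : Type*} [BooleanAlgebra B] (T : Set B) : Prop :=
  ⊥ ∈ T ∧ ⊤ ∈ T ∧ (∀ a ∈ T, aᶜ ∈ T) ∧
    (∀ a ∈ T, ∀ b ∈ T, a ⊓ b ∈ T) ∧ (∀ a ∈ T, ∀ b ∈ T, a ⊔ b ∈ T)

/-- The Boolean subalgebra of `B` generated by a subset `S`. -/
def boolGen {B : Type*} [BooleanAlgebra B] (S : Set B) : Set B :=
  ⋂₀ {T : Set B | IsBoolSubalg T ∧ S ⊆ T}

open scoped symmDiff

section BooleanAlgebra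

variable {B : Type*} [BooleanAlgebra B]

theorem IsBoolSubalg.sdiff_mem {T : Set B} (hT : IsBoolSubalg T) {a b : B} (ha : a ∈ T)
    (hb : b ∈ T) : a \ b ∈ T := by
  rw [sdiff_eq]
  exact hT.2.2.2.1 a ha bᶜ (hT.2.2.1 b hb)

theorem isBoolSubalg_boolGen (S : Set B) : IsBoolSubalg (boolGen S) :=
  ⟨fun _ hT => hT.1.1, fun _ hT => hT.1.2.1,
    fun a ha T hT => hT.1.2.2.1 a (ha T hT),
    fun a ha b hb T hT => hT.1.2.2.2.1 a (ha T hT) b (hb T hT),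
    fun a ha b hb T hT => hT.1.2.2.2.2 a (ha T hT) b (hb T hT)⟩

theorem subset_boolGen (S : Set B) : S ⊆ boolGen S :=
  fun _ hx _ hT => hT.2 hx

theorem boolGen_subset {S T : Set B} (hT : IsBoolSubalg T) (h : S ⊆ T) : boolGen S ⊆ T :=
  fun _ hx => hx T ⟨hT, h⟩

theorem boolGen_mono {S T : Set B} (h : S ⊆ T) : boolGen S ⊆ boolGen T :=
  boolGen_subset (isBoolSubalg_boolGen T) (h.trans (subset_boolGen T))

theorem symmDiff_inf_self (a b : B) : a ∆ (a ⊓ b) = a \ b := by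
  rw [symmDiff_comm, symmDiff_of_le inf_le_left, sdiff_inf_self_left]

theorem sdiff_symmDiff_eq_sup_sdiff (a y d : B) : (a \ y) ∆ d = (a ⊔ d) \ (a ⊓ (y ∆ d)) := by
  refine ((symmDiff_eq_iff_sdiff_eq (inf_le_left.trans le_sup_left)).mp ?_).symm
  rw [← symmDiff_inf_self, inf_symmDiff_distrib_left, symmDiff_assoc, symmDiff_assoc,
    symmDiff_left_comm (a ⊓ d) a, symmDiff_left_comm (a ⊓ y) a, symmDiff_left_comm (a ⊓ d) (a ⊓ y),
    symmDiff_symmDiff_cancel_left, symmDiff_left_comm a, inf_symmDiff_symmDiff]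

def diffChain : List B → B
  | [] => ⊥
  | a :: l => a \ diffChain l

@[simp] theorem diffChain_nil : diffChain ([] : List B) = ⊥ := rfl

@[simp] theorem diffChain_cons (a : B) (l : List B) : diffChain (a :: l) = a \ diffChain l := rfl

theorem inf_diffChain (c : B) : ∀ l : List B, c ⊓ diffChain l = diffChain (l.map (c ⊓ ·))
  | [] => by simp
  | a :: l => by simp [← inf_diffChain c l, inf_sdiff_distrib_left]

theorem inf_diffChain_cons (c a : B) (l : List B) :
    c ⊓ diffChain (a :: l) = (c ⊓ a) \ diffChain l := by
  rw [diffChain_cons, inf_sdiff_assoc]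

def diffChains (D : Set B) : Set B :=
  {x | ∃ l : List B, (∀ a ∈ l, a ∈ D) ∧ diffChain l = x}

section DiffChains

variable {D : Set B}

theorem diffChain_mem_diffChains {l : List B} (hl : ∀ a ∈ l, a ∈ D) :
    diffChain l ∈ diffChains D :=
  ⟨l, hl, rfl⟩

theorem bot_mem_diffChains : (⊥ : B) ∈ diffChains D :=
  ⟨[], by simp, rfl⟩

theorem inf_mem_diffChains_of_mem (hD : InfClosed D) {c x : B} (hc : c ∈ D)
    (hx : x ∈ diffChains D) : c ⊓ x ∈ diffChains D := by
  obtain ⟨l, hl, rfl⟩ := hx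
  rw [inf_diffChain]
  exact diffChain_mem_diffChains fun a ha => by
    obtain ⟨b, hb, rfl⟩ := List.mem_map.mp ha
    exact hD hc (hl b hb)

theorem symmDiff_mem_diffChains_of_mem (hinf : InfClosed D) (hsup : SupClosed D) {d : B}
    (hd : d ∈ D) : ∀ {x : B}, x ∈ diffChains D → x ∆ d ∈ diffChains D := by
  rintro _ ⟨l, hl, rfl⟩
  induction l with
  | nil => exact ⟨[d], by simpa using hd, by simp⟩
  | cons a l ih =>
    have ha : a ∈ D := hl a (List.mem_cons_self)
    obtain ⟨m, hm, hm_eq⟩ := ih fun b hb => hl b (List.mem_cons_of_mem a hb)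
    rw [diffChain_cons, sdiff_symmDiff_eq_sup_sdiff, ← hm_eq, inf_diffChain, ← diffChain_cons]
    refine diffChain_mem_diffChains fun b hb => ?_
    rcases List.mem_cons.mp hb with rfl | hb
    · exact hsup ha hd
    · obtain ⟨e, he, rfl⟩ := List.mem_map.mp hb
      exact hinf ha (hm e he)

theorem symmDiff_mem_diffChains (hinf : InfClosed D) (hsup : SupClosed D) (htop : ⊤ ∈ D)
    {x y : B} (hx : x ∈ diffChains D) (hy : y ∈ diffChains D) : x ∆ y ∈ diffChains D := by
  obtain ⟨l, hl, rfl⟩ := hy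
  suffices ∀ c ∈ D, ∀ x ∈ diffChains D, x ∆ (c ⊓ diffChain l) ∈ diffChains D by
    simpa using this ⊤ htop x hx
  induction l with
  | nil => simp
  | cons a l ih =>
    intro c hc x hx
    have hca : c ⊓ a ∈ D := hinf hc (hl a List.mem_cons_self)
    rw [inf_diffChain_cons, ← symmDiff_inf_self (c ⊓ a), ← symmDiff_assoc]
    exact ih (fun b hb => hl b (List.mem_cons_of_mem a hb)) _ hca _
      (symmDiff_mem_diffChains_of_mem hinf hsup hca hx)

theorem inf_mem_diffChains (hinf : InfClosed D) (hsup : SupClosed D) (htop : ⊤ ∈ D)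
    {x y : B} (hx : x ∈ diffChains D) (hy : y ∈ diffChains D) : x ⊓ y ∈ diffChains D := by
  obtain ⟨l, hl, rfl⟩ := hy
  induction l generalizing x with
  | nil => simpa using bot_mem_diffChains
  | cons a l ih =>
    have hxa : x ⊓ a ∈ diffChains D := inf_comm a x ▸ inf_mem_diffChains_of_mem hinf
      (hl a List.mem_cons_self) hx
    rw [inf_diffChain_cons, ← symmDiff_inf_self]
    exact symmDiff_mem_diffChains hinf hsup htop hxa
      (ih hxa fun b hb => hl b (List.mem_cons_of_mem a hb))

theorem isBoolSubalg_diffChains (hinf : InfClosed D) (hsup : SupClosed D) (htop : ⊤ ∈ D) :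
    IsBoolSubalg (diffChains D) := by
  have hcompl : ∀ x ∈ diffChains D, xᶜ ∈ diffChains D := fun x hx => by
    simpa using symmDiff_mem_diffChains_of_mem hinf hsup htop hx
  refine ⟨bot_mem_diffChains, ⟨[⊤], by simpa using htop, by simp⟩, hcompl,
    fun x hx y hy => inf_mem_diffChains hinf hsup htop hx hy, fun x hx y hy => ?_⟩
  simpa using hcompl _ (inf_mem_diffChains hinf hsup htop (hcompl x hx) (hcompl y hy))

theorem boolGen_subset_diffChains (hinf : InfClosed D) (hsup : SupClosed D) (htop : ⊤ ∈ D) :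
    boolGen D ⊆ diffChains D :=
  boolGen_subset (isBoolSubalg_diffChains hinf hsup htop) fun d hd =>
    ⟨[d], by simpa using hd, by simp⟩

end DiffChains

section Hull

variable {D B' : Set B}

theorem boolGen_inter_subset (hB' : IsBoolSubalg B') : boolGen (D ∩ B') ⊆ boolGen D ∩ B' :=
  fun _ hx => ⟨boolGen_mono Set.inter_subset_left hx, boolGen_subset hB' Set.inter_subset_right hx⟩

theorem inf_diffChain_mem_boolGen_inter (hinf : InfClosed D) (hB' : IsBoolSubalg B')
    (hhull : ∀ a ∈ D, ∀ x ∈ B', x ≤ a → ∃ w ∈ D ∩ B', x ≤ w ∧ w ≤ a)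
    {l : List B} (hl : ∀ a ∈ l, a ∈ D) :
    ∀ c ∈ D, c ⊓ diffChain l ∈ B' → c ⊓ diffChain l ∈ boolGen (D ∩ B') := by
  have hgen := isBoolSubalg_boolGen (D ∩ B')
  induction l with
  | nil => simpa using fun _ _ _ => hgen.1
  | cons a l ih =>
    intro c hc hx
    rw [inf_diffChain_cons] at hx ⊢
    obtain ⟨w, ⟨hwD, hwB'⟩, hxw, hwa⟩ :=
      hhull (c ⊓ a) (hinf hc (hl a List.mem_cons_self)) _ hx sdiff_le
    have hwx : w \ ((c ⊓ a) \ diffChain l) = w ⊓ diffChain l := by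
      rw [sdiff_sdiff_right', sdiff_eq_bot_iff.mpr hwa, bot_sup_eq]
    have hw_inf : w ⊓ diffChain l ∈ boolGen (D ∩ B') :=
      ih (fun b hb => hl b (List.mem_cons_of_mem a hb)) w hwD (hwx ▸ hB'.sdiff_mem hwB' hx)
    rw [← inf_eq_right.mpr hxw, ← sdiff_sdiff_right_self, hwx]
    exact hgen.sdiff_mem (subset_boolGen _ ⟨hwD, hwB'⟩) hw_inf

theorem boolGen_inter_eq (hinf : InfClosed D) (hsup : SupClosed D) (htop : ⊤ ∈ D)
    (hB' : IsBoolSubalg B') (hhull : ∀ a ∈ D, ∀ x ∈ B', x ≤ a → ∃ w ∈ D ∩ B', x ≤ w ∧ w ≤ a) :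
    boolGen (D ∩ B') = boolGen D ∩ B' := by
  refine (boolGen_inter_subset hB').antisymm fun x ⟨hxD, hxB'⟩ => ?_
  obtain ⟨l, hl, rfl⟩ := boolGen_subset_diffChains hinf hsup htop hxD
  rw [← top_inf_eq (diffChain l)] at hxB' ⊢
  exact inf_diffChain_mem_boolGen_inter hinf hB' hhull hl ⊤ htop hxB'

end Hull

end BooleanAlgebra

theorem stmt19_general {B I : Type*} [BooleanAlgebra B]
    (S : I → Type*) [∀ i, SemilatticeInf (S i)]
    (f : ∀ i, B → S i) (g : ∀ i, S i → B)
    -- a directed family of adjunctions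
    (adj : ∀ (i : I) (b : B) (s : S i), f i b ≤ s ↔ b ≤ g i s)
    -- `D = ⋃ᵢ Im(gᵢ)` is a bounded sublattice of `B`
    (D : Set B) (hD : D = ⋃ i, Set.range (g i))
    (htop : ⊤ ∈ D)
    (hinf : ∀ a ∈ D, ∀ b ∈ D, a ⊓ b ∈ D) (hsup : ∀ a ∈ D, ∀ b ∈ D, a ⊔ b ∈ D)
    -- `B'` is a Boolean subalgebra of `B` closed under each closure operator `cᵢ = gᵢ ∘ fᵢ`
    (B' : Set B) (hB' : IsBoolSubalg B')
    (hclosed : ∀ (i : I), ∀ b ∈ B', g i (f i b) ∈ B') :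
    boolGen (D ∩ B') = boolGen D ∩ B' ∧
    -- in particular, the left-to-right containment (which always holds)
    boolGen (D ∩ B') ⊆ boolGen D ∩ B' := by
  have hhull : ∀ a ∈ D, ∀ x ∈ B', x ≤ a → ∃ w ∈ D ∩ B', x ≤ w ∧ w ≤ a := by
    intro a ha x hx hxa
    obtain ⟨i, s, rfl⟩ := Set.mem_iUnion.mp (hD ▸ ha)
    have gc : GaloisConnection (f i) (g i) := adj i
    exact ⟨g i (f i x), ⟨hD ▸ Set.mem_iUnion_of_mem i ⟨_, rfl⟩, hclosed i x hx⟩,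
      gc.le_u_l x, gc.monotone_u (gc.l_le hxa)⟩
  exact ⟨boolGen_inter_eq (fun a ha b hb => hinf a ha b hb) (fun a ha b hb => hsup a ha b hb)
    htop hB' hhull, boolGen_inter_subset hB'⟩

theorem stmt19 {B I : Type*} [BooleanAlgebra B] [Preorder I] [IsDirected I (· ≤ ·)]
    (S : I → Type*) [∀ i, SemilatticeInf (S i)]
    (f : ∀ i, B → S i) (g : ∀ i, S i → B)
    -- a directed family of adjunctions
    (adj : ∀ (i : I) (b : B) (s : S i), f i b ≤ s ↔ b ≤ g i s)
    (him : ∀ i j : I, i ≤ j → Set.range (g i) ⊆ Set.range (g j))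
    -- `D = ⋃ᵢ Im(gᵢ)` is a bounded sublattice of `B`
    (D : Set B) (hD : D = ⋃ i, Set.range (g i))
    (hbot : ⊥ ∈ D) (htop : ⊤ ∈ D)
    (hinf : ∀ a ∈ D, ∀ b ∈ D, a ⊓ b ∈ D) (hsup : ∀ a ∈ D, ∀ b ∈ D, a ⊔ b ∈ D)
    -- `D` generates `B` as a Boolean algebra, i.e. `B` is the Booleanization of `D`
    (hgen : boolGen D = Set.univ)
    -- `B'` is a Boolean subalgebra of `B` closed under each closure operator `cᵢ = gᵢ ∘ fᵢ`
    (B' : Set B) (hB' : IsBoolSubalg B')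
    (hclosed : ∀ (i : I), ∀ b ∈ B', g i (f i b) ∈ B') :
    boolGen (D ∩ B') = boolGen D ∩ B' ∧
    -- in particular, the left-to-right containment (which always holds)
    boolGen (D ∩ B') ⊆ boolGen D ∩ B' :=
  stmt19_general S f g adj D hD htop hinf hsup B' hB' hclosed
end
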